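/- If σ₁ is separable then R(σ₁ ⊗ σ₂) ≤ R(σ₂): tensoring with a separable state does not increase the robustness of entanglement. -/

import Mathlib

open scoped BigOperators Matrix ComplexOrder

noncomputable section

/-- The pure product state |a⟩⟨a| ⊗ |b⟩⟨b| as a matrix on the bipartite index type. -/
def prodState {α β : Type*} [Fintype α] [Fintype β] (a : α → ℂ) (b : β → ℂ) :
    Matrix (α × β) (α × β) ℂ :=
  fun x y => (a x.1 * star (a y.1)) * (b x.2 * star (b y.2))

/-- A bipartite matrix is separable if it is a convex combination of pure product states. -/
def SepState {α β : Type*} [Fintype α] [Fintype β]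
    (σ : Matrix (α × β) (α × β) ℂ) : Prop :=
  ∃ (k : ℕ) (p : Fin k → ℝ) (a : Fin k → α → ℂ) (b : Fin k → β → ℂ),
    (∀ i, 0 ≤ p i) ∧ (∑ i, p i = 1) ∧
    (∀ i, ∑ x, ‖a i x‖ ^ 2 = 1) ∧ (∀ i, ∑ x, ‖b i x‖ ^ 2 = 1) ∧
    σ = ∑ i, ((p i : ℂ)) • prodState (a i) (b i)

/-- A density matrix: positive semidefinite with unit trace. -/
def IsDensity {n : Type*} [Fintype n] [DecidableEq n] (σ : Matrix n n ℂ) : Prop :=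
  σ.PosSemidef ∧ σ.trace = 1

/-- The robustness of entanglement: the least s ≥ 0 such that mixing σ with some
separable state π with weights 1/(1+s), s/(1+s) yields a separable state. -/
def robustness {α β : Type*} [Fintype α] [Fintype β] [DecidableEq α] [DecidableEq β]
    (σ : Matrix (α × β) (α × β) ℂ) : ℝ :=
  sInf { s : ℝ | 0 ≤ s ∧ ∃ π : Matrix (α × β) (α × β) ℂ, SepState π ∧
    SepState ((((1 + s)⁻¹ : ℝ) : ℂ) • σ + (((s / (1 + s)) : ℝ) : ℂ) • π) }

/-- σ₁ ⊗ σ₂ regrouped across the A₁A₂ | B₁B₂ cut. -/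
def tensorAB {m n : ℕ} (σ₁ : Matrix (Fin m × Fin m) (Fin m × Fin m) ℂ)
    (σ₂ : Matrix (Fin n × Fin n) (Fin n × Fin n) ℂ) :
    Matrix ((Fin m × Fin n) × (Fin m × Fin n)) ((Fin m × Fin n) × (Fin m × Fin n)) ℂ :=
  fun x y => σ₁ (x.1.1, x.2.1) (y.1.1, y.2.1) * σ₂ (x.1.2, x.2.2) (y.1.2, y.2.2)

/-!
Both robustnesses are infima over the same set of weights `s`. The map `σ₂ ↦ σ₁ ⊗ σ₂` and the
partial trace over `A₁B₁` are linear and preserve separability, and since `tr σ₁ = 1` they send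
`σ₂` and `σ₁ ⊗ σ₂` to each other; so a separable mixture witnessing `s` for one state is carried
to one witnessing `s` for the other.
-/

section SepState

variable {α β : Type*} [Fintype α] [Fintype β]

lemma sepState_of_sum_prodState {ι : Type*} [Fintype ι] (σ : Matrix (α × β) (α × β) ℂ)
    (p : ι → ℝ) (a : ι → α → ℂ) (b : ι → β → ℂ) (hp : ∀ i, 0 ≤ p i) (hp_sum : ∑ i, p i = 1)
    (ha : ∀ i, ∑ x, ‖a i x‖ ^ 2 = 1) (hb : ∀ i, ∑ x, ‖b i x‖ ^ 2 = 1)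
    (hσ : σ = ∑ i, ((p i : ℂ)) • prodState (a i) (b i)) : SepState σ := by
  let e := (Fintype.equivFin ι).symm
  refine ⟨Fintype.card ι, p ∘ e, a ∘ e, b ∘ e, fun i => hp _, ?_, fun i => ha _, fun i => hb _, ?_⟩
  · rw [← hp_sum]
    exact e.sum_comp p
  · rw [hσ]
    exact (e.sum_comp fun i => ((p i : ℂ)) • prodState (a i) (b i)).symm

lemma SepState.nonempty {σ : Matrix (α × β) (α × β) ℂ} (h : SepState σ) :
    Nonempty α ∧ Nonempty β := by
  obtain ⟨k, p, a, b, -, hp_sum, ha, hb, -⟩ := h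
  obtain ⟨i⟩ : Nonempty (Fin k) := by
    cases k with
    | zero => simp at hp_sum
    | succ k => exact ⟨0⟩
  constructor
  · by_contra hα
    rw [not_nonempty_iff] at hα
    simpa using ha i
  · by_contra hβ
    rw [not_nonempty_iff] at hβ
    simpa using hb i

lemma trace_prodState (a : α → ℂ) (b : β → ℂ) :
    (prodState a b).trace = ((∑ x, ‖a x‖ ^ 2 : ℝ) : ℂ) * ((∑ x, ‖b x‖ ^ 2 : ℝ) : ℂ) := by
  simp only [Matrix.trace, Matrix.diag, prodState, Fintype.sum_prod_type, Complex.ofReal_sum,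
    Complex.ofReal_pow, ← Complex.mul_conj', Finset.sum_mul_sum]
  rfl

lemma SepState.trace_eq_one {σ : Matrix (α × β) (α × β) ℂ} (h : SepState σ) : σ.trace = 1 := by
  obtain ⟨k, p, a, b, -, hp_sum, ha, hb, rfl⟩ := h
  simp only [Matrix.trace_sum, Matrix.trace_smul, trace_prodState, ha, hb, Complex.ofReal_one,
    mul_one, smul_eq_mul]
  exact_mod_cast hp_sum

end SepState

lemma exists_unit_mul_star_eq {γ : Type*} [Fintype γ] [Nonempty γ] (c : γ → ℂ) :
    ∃ u : γ → ℂ, (∑ x, ‖u x‖ ^ 2 = 1) ∧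
      ∀ x y, c x * star (c y) = ((∑ z, ‖c z‖ ^ 2 : ℝ) : ℂ) * (u x * star (u y)) := by
  obtain ⟨t, ht_def⟩ : ∃ t, t = ∑ z, ‖c z‖ ^ 2 := ⟨_, rfl⟩
  rw [← ht_def]
  rcases (ht_def ▸ Finset.sum_nonneg fun z _ => sq_nonneg ‖c z‖ : 0 ≤ t).eq_or_lt with ht | ht
  · have hc : ∀ z, c z = 0 := fun z => by
      simpa using (Finset.sum_eq_zero_iff_of_nonneg fun z _ => sq_nonneg ‖c z‖).mp
        (ht.trans ht_def).symm z (Finset.mem_univ z)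
    classical
    refine ⟨Pi.single (Classical.arbitrary γ) 1, ?_, fun x y => by simp [hc, ← ht]⟩
    simp [apply_ite (‖·‖ : ℂ → ℝ), apply_ite (· ^ 2 : ℝ → ℝ), Finset.sum_ite_eq', Pi.single_apply]
  · obtain ⟨r, hr, rfl⟩ : ∃ r : ℝ, 0 < r ∧ r ^ 2 = t :=
      ⟨Real.sqrt t, Real.sqrt_pos.2 ht, Real.sq_sqrt ht.le⟩
    refine ⟨fun x => ((r⁻¹ : ℝ) : ℂ) * c x, ?_, fun x y => ?_⟩
    · simp only [norm_mul, Complex.norm_real, Real.norm_eq_abs, abs_inv, abs_of_pos hr, mul_pow,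
        ← Finset.mul_sum, ← ht_def, inv_pow]
      exact inv_mul_cancel₀ (pow_pos hr 2).ne'
    · simp only [star_mul', Complex.star_def, Complex.conj_ofReal]
      push_cast
      field_simp

lemma sum_norm_sq_mul {γ δ : Type*} [Fintype γ] [Fintype δ] (f : γ → ℂ) (g : δ → ℂ) :
    ∑ x : γ × δ, ‖f x.1 * g x.2‖ ^ 2 = (∑ x, ‖f x‖ ^ 2) * ∑ y, ‖g y‖ ^ 2 := by
  simp only [norm_mul, mul_pow, Fintype.sum_prod_type, ← Finset.mul_sum, ← Finset.sum_mul]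

lemma exists_prodState_eq_smul {α β : Type*} [Fintype α] [Fintype β] [Nonempty α] [Nonempty β]
    (c : α → ℂ) (d : β → ℂ) :
    ∃ c' : α → ℂ, ∃ d' : β → ℂ, (∑ x, ‖c' x‖ ^ 2 = 1) ∧ (∑ x, ‖d' x‖ ^ 2 = 1) ∧
      prodState c d =
        ((∑ x, ‖c x‖ ^ 2 : ℝ) : ℂ) • ((∑ x, ‖d x‖ ^ 2 : ℝ) : ℂ) • prodState c' d' := by
  obtain ⟨c', hc', hc⟩ := exists_unit_mul_star_eq c
  obtain ⟨d', hd', hd⟩ := exists_unit_mul_star_eq d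
  refine ⟨c', d', hc', hd', ?_⟩
  ext x y
  simp only [prodState, hc, hd, Matrix.smul_apply, smul_eq_mul]
  ring

section Bipartite

variable {α₁ β₁ α₂ β₂ : Type*}

/-- `σ₁ ⊗ σ₂`, with rows and columns regrouped across the cut `A₁A₂ | B₁B₂`. -/
def bipartiteTensor :
    Matrix (α₁ × β₁) (α₁ × β₁) ℂ →ₗ[ℂ] Matrix (α₂ × β₂) (α₂ × β₂) ℂ →ₗ[ℂ]
      Matrix ((α₁ × α₂) × (β₁ × β₂)) ((α₁ × α₂) × (β₁ × β₂)) ℂ :=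
  LinearMap.mk₂ ℂ (fun σ₁ σ₂ => Matrix.of fun x y =>
      σ₁ (x.1.1, x.2.1) (y.1.1, y.2.1) * σ₂ (x.1.2, x.2.2) (y.1.2, y.2.2))
    (fun _ _ _ => by ext; simp [add_mul]) (fun _ _ _ => by ext; simp [mul_assoc])
    (fun _ _ _ => by ext; simp [mul_add]) (fun _ _ _ => by ext; simp [mul_left_comm])

lemma bipartiteTensor_apply (σ₁ : Matrix (α₁ × β₁) (α₁ × β₁) ℂ)
    (σ₂ : Matrix (α₂ × β₂) (α₂ × β₂) ℂ) (x y : (α₁ × α₂) × (β₁ × β₂)) :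
    bipartiteTensor σ₁ σ₂ x y =
      σ₁ (x.1.1, x.2.1) (y.1.1, y.2.1) * σ₂ (x.1.2, x.2.2) (y.1.2, y.2.2) :=
  rfl

variable [Fintype α₁] [Fintype β₁]

/-- The partial trace over the subsystem `A₁B₁`. -/
def partialTraceFst :
    Matrix ((α₁ × α₂) × (β₁ × β₂)) ((α₁ × α₂) × (β₁ × β₂)) ℂ →ₗ[ℂ]
      Matrix (α₂ × β₂) (α₂ × β₂) ℂ where
  toFun ρ := Matrix.of fun x y => ∑ u : α₁, ∑ v : β₁, ρ ((u, x.1), (v, x.2)) ((u, y.1), (v, y.2))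
  map_add' _ _ := by ext; simp [Finset.sum_add_distrib]
  map_smul' _ _ := by ext; simp [Finset.mul_sum]

lemma partialTraceFst_apply (ρ : Matrix ((α₁ × α₂) × (β₁ × β₂)) ((α₁ × α₂) × (β₁ × β₂)) ℂ)
    (x y : α₂ × β₂) :
    partialTraceFst ρ x y = ∑ u : α₁, ∑ v : β₁, ρ ((u, x.1), (v, x.2)) ((u, y.1), (v, y.2)) :=
  rfl

lemma partialTraceFst_bipartiteTensor {σ₁ : Matrix (α₁ × β₁) (α₁ × β₁) ℂ} (h : σ₁.trace = 1)
    (σ₂ : Matrix (α₂ × β₂) (α₂ × β₂) ℂ) : partialTraceFst (bipartiteTensor σ₁ σ₂) = σ₂ := by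
  ext x y
  simp only [partialTraceFst_apply, bipartiteTensor_apply, ← Finset.sum_mul,
    ← Fintype.sum_prod_type']
  change σ₁.trace * σ₂ x y = σ₂ x y
  rw [h, one_mul]

variable [Fintype α₂] [Fintype β₂]

lemma partialTraceFst_prodState (a : α₁ × α₂ → ℂ) (b : β₁ × β₂ → ℂ) :
    partialTraceFst (prodState a b) =
      ∑ u, ∑ v, prodState (fun x => a (u, x)) (fun x => b (v, x)) := by
  ext x y
  simp only [partialTraceFst_apply, prodState, Matrix.sum_apply]

lemma bipartiteTensor_prodState (a : α₁ → ℂ) (b : β₁ → ℂ) (c : α₂ → ℂ) (d : β₂ → ℂ) :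
    bipartiteTensor (prodState a b) (prodState c d) =
      prodState (fun x => a x.1 * c x.2) (fun y => b y.1 * d y.2) := by
  ext x y
  simp only [bipartiteTensor_apply, prodState, star_mul']
  ring

lemma sepState_bipartiteTensor {σ₁ : Matrix (α₁ × β₁) (α₁ × β₁) ℂ}
    {σ₂ : Matrix (α₂ × β₂) (α₂ × β₂) ℂ} (h₁ : SepState σ₁) (h₂ : SepState σ₂) :
    SepState (bipartiteTensor σ₁ σ₂) := by
  obtain ⟨k, p, a, b, hp, hp_sum, ha, hb, rfl⟩ := h₁
  obtain ⟨l, q, c, d, hq, hq_sum, hc, hd, rfl⟩ := h₂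
  refine sepState_of_sum_prodState (ι := Fin k × Fin l) _ (fun i => p i.1 * q i.2)
    (fun i x => a i.1 x.1 * c i.2 x.2) (fun i y => b i.1 y.1 * d i.2 y.2)
    (fun i => mul_nonneg (hp _) (hq _)) ?_ (fun i => by rw [sum_norm_sq_mul, ha, hc, one_mul])
    (fun i => by rw [sum_norm_sq_mul, hb, hd, one_mul]) ?_
  · simp only [Fintype.sum_prod_type, ← Finset.mul_sum, hq_sum, mul_one, hp_sum]
  · simp only [LinearMap.map_sum₂, LinearMap.map_smul₂]
    simp only [map_sum, map_smul, bipartiteTensor_prodState, Finset.smul_sum, smul_smul,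
      Fintype.sum_prod_type, Complex.ofReal_mul]

lemma sepState_partialTraceFst
    {ρ : Matrix ((α₁ × α₂) × (β₁ × β₂)) ((α₁ × α₂) × (β₁ × β₂)) ℂ} (h : SepState ρ) :
    SepState (partialTraceFst ρ) := by
  have : Nonempty α₂ := (nonempty_prod.1 h.nonempty.1).2
  have : Nonempty β₂ := (nonempty_prod.1 h.nonempty.2).2
  obtain ⟨k, p, a, b, hp, hp_sum, ha, hb, rfl⟩ := h
  -- Tracing out `A₁B₁` splits `|aᵢ⟩⟨aᵢ| ⊗ |bᵢ⟩⟨bᵢ|` into the product states of the slices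
  -- `aᵢ (u, ·)`, `bᵢ (v, ·)`, weighted by their squared norms, which sum to `1`.
  let wa : Fin k → α₁ → ℝ := fun i u => ∑ x, ‖a i (u, x)‖ ^ 2
  let wb : Fin k → β₁ → ℝ := fun i v => ∑ y, ‖b i (v, y)‖ ^ 2
  have hwa : ∀ i, ∑ u, wa i u = 1 := fun i => (Fintype.sum_prod_type _).symm.trans (ha i)
  have hwb : ∀ i, ∑ v, wb i v = 1 := fun i => (Fintype.sum_prod_type _).symm.trans (hb i)
  choose A B hA hB hAB using fun (i : Fin k) (u : α₁) (v : β₁) =>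
    exists_prodState_eq_smul (fun x => a i (u, x)) (fun y => b i (v, y))
  refine sepState_of_sum_prodState (ι := Fin k × α₁ × β₁) _
    (fun j => p j.1 * (wa j.1 j.2.1 * wb j.1 j.2.2)) (fun j => A j.1 j.2.1 j.2.2)
    (fun j => B j.1 j.2.1 j.2.2) (fun j => mul_nonneg (hp _) (by positivity)) ?_
    (fun j => hA _ _ _) (fun j => hB _ _ _) ?_
  · simp only [Fintype.sum_prod_type, ← Finset.mul_sum, hwa, hwb, mul_one, hp_sum]
  · simp only [map_sum, map_smul, partialTraceFst_prodState, hAB, Finset.smul_sum, smul_smul,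
      Fintype.sum_prod_type, Complex.ofReal_mul, wa, wb]

end Bipartite

section Robustness

variable {α β α' β' : Type*} [Fintype α] [Fintype β] [Fintype α'] [Fintype β']

lemma exists_sepState_mix_map
    (T : Matrix (α × β) (α × β) ℂ →ₗ[ℂ] Matrix (α' × β') (α' × β') ℂ)
    (hT : ∀ π, SepState π → SepState (T π)) {σ : Matrix (α × β) (α × β) ℂ} {c d : ℂ}
    (h : ∃ π, SepState π ∧ SepState (c • σ + d • π)) :
    ∃ π, SepState π ∧ SepState (c • T σ + d • π) := by
  obtain ⟨π, hπ, hmix⟩ := h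
  refine ⟨T π, hT π hπ, ?_⟩
  simpa only [map_add, map_smul] using hT _ hmix

lemma robustness_eq_of_sepState_maps [DecidableEq α] [DecidableEq β] [DecidableEq α']
    [DecidableEq β'] {σ : Matrix (α × β) (α × β) ℂ} {ρ : Matrix (α' × β') (α' × β') ℂ}
    (T : Matrix (α × β) (α × β) ℂ →ₗ[ℂ] Matrix (α' × β') (α' × β') ℂ)
    (P : Matrix (α' × β') (α' × β') ℂ →ₗ[ℂ] Matrix (α × β) (α × β) ℂ)
    (hT : ∀ π, SepState π → SepState (T π)) (hP : ∀ π, SepState π → SepState (P π))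
    (hTσ : T σ = ρ) (hPρ : P ρ = σ) : robustness ρ = robustness σ := by
  unfold robustness
  congr 1
  ext s
  refine and_congr_right fun _ => ⟨fun h => ?_, fun h => ?_⟩
  · exact hPρ ▸ exists_sepState_mix_map P hP h
  · exact hTσ ▸ exists_sepState_mix_map T hT h

end Robustness

theorem robustness_tensor_separable_general {m n : ℕ}
    (σ₁ : Matrix (Fin m × Fin m) (Fin m × Fin m) ℂ)
    (σ₂ : Matrix (Fin n × Fin n) (Fin n × Fin n) ℂ)
    (hsep : SepState σ₁) :
    robustness (tensorAB σ₁ σ₂) ≤ robustness σ₂ :=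
  (robustness_eq_of_sepState_maps (bipartiteTensor σ₁) partialTraceFst
    (fun _ => sepState_bipartiteTensor hsep) (fun _ => sepState_partialTraceFst) rfl
    (partialTraceFst_bipartiteTensor hsep.trace_eq_one σ₂)).le

/-- Tensoring with a separable state does not increase the robustness of entanglement. -/
theorem robustness_tensor_separable {m n : ℕ}
    (σ₁ : Matrix (Fin m × Fin m) (Fin m × Fin m) ℂ)
    (σ₂ : Matrix (Fin n × Fin n) (Fin n × Fin n) ℂ)
    (h₁ : IsDensity σ₁) (h₂ : IsDensity σ₂) (hsep : SepState σ₁) :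
    robustness (tensorAB σ₁ σ₂) ≤ robustness σ₂ :=
  robustness_tensor_separable_general σ₁ σ₂ hsep

end
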